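/- arXiv:2308.10654 — 5 statements merged into one kernel-verified Lean document; each statement's English description precedes it below -/
import Mathlib

section
/- Let p, p₁, p₂ ∈ [0,1] be real numbers and set r := p·p₁ + (1−p)·p₂ and q := p·p₁ / r. If r ≠ 0, then for all real numbers a, b: p·(p₁·a) + (1−p)·(p₂·b) = r·(q·a + (1−q)·b). (This is the ΔQSD failure-accumulation law (o₁ ⇌[p₁] ⊥) ⇌[p] (o₂ ⇌[p₂] ⊥) = (o₁ ⇌[q] o₂) ⇌[r] ⊥.) -/
/-- Failure accumulation under probabilistic choice:
`(o₁ ⇌[p₁] ⊥) ⇌[p] (o₂ ⇌[p₂] ⊥) = (o₁ ⇌[q] o₂) ⇌[r] ⊥`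
where `r = p·p₁ + (1−p)·p₂` and `q = p·p₁ / r`. -/
theorem probChoice_fail_acc (p p₁ p₂ : ℝ)
    (hp : p ∈ Set.Icc (0:ℝ) 1) (hp₁ : p₁ ∈ Set.Icc (0:ℝ) 1)
    (hp₂ : p₂ ∈ Set.Icc (0:ℝ) 1)
    (r : ℝ) (hr : r = p * p₁ + (1 - p) * p₂) (hr0 : r ≠ 0)
    (q : ℝ) (hq : q = p * p₁ / r) :
    ∀ a b : ℝ, p * (p₁ * a) + (1 - p) * (p₂ * b) = r * (q * a + (1 - q) * b) := by
  intro a b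
  have h1 : r * q = p * p₁ := by rw [hq]; field_simp
  linear_combination (b - a) * h1 - b * hr
end

section
/- Let p, q ∈ [0,1] be real numbers with 1 − q(1−p) ≠ 0. Then for all real numbers a, b: p·a + (1−p)·(q·b + (1−q)·1) = q(1−p)·b + (1 − q(1−p))·( (p/(1−q(1−p)))·a + (1 − p/(1−q(1−p)))·1 ). (This is the ΔQSD equivalence o₁ ⇌[p] (o₂ ⇌[q] ⊤) = o₂ ⇌[q(1−p)] (o₁ ⇌[p/(1−q(1−p))] ⊤).) -/
theorem probChoice_top_swap_general (p q : ℝ)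
    (h : 1 - q * (1 - p) ≠ 0) :
    ∀ a b : ℝ,
      p * a + (1 - p) * (q * b + (1 - q) * 1)
        = q * (1 - p) * b + (1 - q * (1 - p)) *
            ((p / (1 - q * (1 - p))) * a + (1 - p / (1 - q * (1 - p))) * 1) := by
  intro a b
  have weight_cancel : (1 - q * (1 - p)) * (p / (1 - q * (1 - p))) = p := mul_div_cancel₀ p h
  linear_combination (1 - a) * weight_cancel

/-- The ΔQSD equivalence
`o₁ ⇌[p] (o₂ ⇌[q] ⊤) = o₂ ⇌[q(1−p)] (o₁ ⇌[p/(1−q(1−p))] ⊤)`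
pointwise on ΔQ values, where ⊤ has ΔQ value 1. -/
theorem probChoice_top_swap (p q : ℝ)
    (hp : p ∈ Set.Icc (0:ℝ) 1) (hq : q ∈ Set.Icc (0:ℝ) 1)
    (h : 1 - q * (1 - p) ≠ 0) :
    ∀ a b : ℝ,
      p * a + (1 - p) * (q * b + (1 - q) * 1)
        = q * (1 - p) * b + (1 - q * (1 - p)) *
            ((p / (1 - q * (1 - p))) * a + (1 - p / (1 - q * (1 - p))) * 1) :=
  probChoice_top_swap_general p q h
end

section
/- For real numbers a, b, c, the equality a·(b + c − b·c) = a·b + a·c − (a·b)·(a·c) holds if and only if a·b·c·(1−a) = 0. (Hence all-to-finish distributes over any-to-finish, o₁ ∥∀ (o₂ ∥∃ o₃) = (o₁ ∥∀ o₂) ∥∃ (o₁ ∥∀ o₃), only in degenerate cases, so outcome expressions with (∥∃, ∥∀) do not form a semiring when observing time.) -/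
/-- All-to-finish distributes over any-to-finish only in degenerate cases:
`a·(b + c − b·c) = a·b + a·c − (a·b)·(a·c)` iff `a·b·c·(1−a) = 0`. -/
theorem allToFinish_distrib_anyToFinish_iff (a b c : ℝ) :
    a * (b + c - b * c) = a * b + a * c - (a * b) * (a * c) ↔
      a * b * c * (1 - a) = 0 := by
  constructor <;> intro h <;> nlinarith [h]
end

section
/- Let p, p₁, p₂ ∈ [0,1] be real numbers. If for all a, b ∈ [0,1] the equality p₁·a + p₂·b − (p₁·a)·(p₂·b) = p·(a + b − a·b) holds, then either p = p₁ = p₂ = 1 or p = p₁ = p₂ = 0. (Hence there is no weight p such that (o₁ ⇌[p₁] ⊥) ∥∃ (o₂ ⇌[p₂] ⊥) = (o₁ ∥∃ o₂) ⇌[p] ⊥ holds in general: failure does not accumulate under any-to-finish.) -/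
/-- Failure does not accumulate under any-to-finish: if
`p₁·a + p₂·b − (p₁·a)·(p₂·b) = p·(a + b − a·b)` for all `a, b ∈ [0,1]`, then
either `p = p₁ = p₂ = 1` or `p = p₁ = p₂ = 0`. -/
theorem no_fail_acc_anyToFinish (p p₁ p₂ : ℝ)
    (hp : p ∈ Set.Icc (0:ℝ) 1) (hp₁ : p₁ ∈ Set.Icc (0:ℝ) 1)
    (hp₂ : p₂ ∈ Set.Icc (0:ℝ) 1)
    (h : ∀ a ∈ Set.Icc (0:ℝ) 1, ∀ b ∈ Set.Icc (0:ℝ) 1,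
      p₁ * a + p₂ * b - (p₁ * a) * (p₂ * b) = p * (a + b - a * b)) :
    (p = 1 ∧ p₁ = 1 ∧ p₂ = 1) ∨ (p = 0 ∧ p₁ = 0 ∧ p₂ = 0) := by
  have h10 := h 1 (by norm_num) 0 (by norm_num)
  have h01 := h 0 (by norm_num) 1 (by norm_num)
  have h11 := h 1 (by norm_num) 1 (by norm_num)
  have hp1 : p₁ = p := by linarith [h10]
  have hp2 : p₂ = p := by linarith [h01]
  have hpp : p = p * p := by nlinarith [h11]
  have : p * (p - 1) = 0 := by ring_nf; linarith [hpp]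
  rcases mul_eq_zero.mp this with h0 | h1
  · right; exact ⟨h0, by rw [hp1, h0], by rw [hp2, h0]⟩
  · left; have : p = 1 := by linarith
    exact ⟨this, by rw [hp1, this], by rw [hp2, this]⟩
end

section
/- For every real number p with 0 < p < 1, there exist a, b, c ∈ [0,1] such that p·(a + b − a·b) + (1−p)·c ≠ X + Y − X·Y, where X = p·a + (1−p)·c and Y = p·b + (1−p)·c. (Hence (o₁ ∥∃ o₂) ⇌ o₃ ≠ (o₁ ⇌ o₃) ∥∃ (o₂ ⇌ o₃) in general.) -/
/-- `(o₁ ∥∃ o₂) ⇌ o₃ ≠ (o₁ ⇌ o₃) ∥∃ (o₂ ⇌ o₃)` in general. -/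
theorem anyToFinish_probChoice_not_distrib (p : ℝ) (hp : 0 < p) (hp1 : p < 1) :
    ∃ a ∈ Set.Icc (0:ℝ) 1, ∃ b ∈ Set.Icc (0:ℝ) 1, ∃ c ∈ Set.Icc (0:ℝ) 1,
      p * (a + b - a * b) + (1 - p) * c
        ≠ (p * a + (1 - p) * c) + (p * b + (1 - p) * c)
            - (p * a + (1 - p) * c) * (p * b + (1 - p) * c) := by
  refine ⟨1, by norm_num, 1, by norm_num, 0, by norm_num, ?_⟩
  ring_nf
  intro h
  nlinarith [sq_nonneg p, sq_nonneg (1 - p)]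
end
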